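/- Let (X_n) be a Markov chain on Σ and A, B, C ⊂ Σ measurable sets with finite expected hitting times. Then sup_{x∈A} E_x[τ⁺_B] ≤ sup_{x∈A} E_x[τ⁺_{B∪C}] + (sup_{x∈A} P_x[τ⁺_C < τ⁺_B]) · (sup_{x∈C} E_x[τ⁺_B]). -/

import Mathlib

open MeasureTheory ProbabilityTheory

/-- First return time to a set `A` (junk value `0` if `A` is never visited at a
positive time). -/
noncomputable def retTime {S : Type*} (A : Set S) (ω : ℕ → S) : ℕ :=
  sInf {n | 1 ≤ n ∧ ω n ∈ A}

section helpers
variable {S : Type*} {D : Set S} {ω : ℕ → S}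

lemma retTime_one_le (h : ∃ n, 1 ≤ n ∧ ω n ∈ D) : 1 ≤ retTime D ω :=
  (Nat.sInf_mem (s := {n | 1 ≤ n ∧ ω n ∈ D}) h).1

lemma retTime_mem (h : ∃ n, 1 ≤ n ∧ ω n ∈ D) : ω (retTime D ω) ∈ D :=
  (Nat.sInf_mem (s := {n | 1 ≤ n ∧ ω n ∈ D}) h).2

lemma retTime_min (h : ∃ n, 1 ≤ n ∧ ω n ∈ D) {j : ℕ} (h1 : 1 ≤ j)
    (h2 : j < retTime D ω) : ω j ∉ D := fun hj =>
  Nat.notMem_of_lt_sInf h2 ⟨h1, hj⟩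

lemma retTime_le {j : ℕ} (h1 : 1 ≤ j) (h2 : ω j ∈ D) : retTime D ω ≤ j :=
  Nat.sInf_le ⟨h1, h2⟩

lemma retTime_union {B C : Set S} (hb : ∃ n, 1 ≤ n ∧ ω n ∈ B)
    (hc : ∃ n, 1 ≤ n ∧ ω n ∈ C) :
    retTime (B ∪ C) ω = min (retTime B ω) (retTime C ω) := by
  apply le_antisymm
  · rcases min_cases (retTime B ω) (retTime C ω) with ⟨h, _⟩ | ⟨h, _⟩
    · rw [h]
      exact retTime_le (retTime_one_le hb) (Or.inl (retTime_mem hb))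
    · rw [h]
      exact retTime_le (retTime_one_le hc) (Or.inr (retTime_mem hc))
  · have hne : {n | 1 ≤ n ∧ ω n ∈ B ∪ C}.Nonempty := by
      obtain ⟨n, h1, h2⟩ := hb; exact ⟨n, h1, Or.inl h2⟩
    obtain ⟨h1, h2⟩ := Nat.sInf_mem hne
    rcases h2 with h2 | h2
    · exact le_trans (min_le_left _ _) (retTime_le h1 h2)
    · exact le_trans (min_le_right _ _) (retTime_le h1 h2)

lemma retTime_shift {B : Set S} (hb : ∃ n, 1 ≤ n ∧ ω n ∈ B) {k : ℕ}
    (hk : ∀ j, 1 ≤ j → j ≤ k → ω j ∉ B) :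
    k < retTime B ω ∧ retTime B (fun n => ω (n + k)) = retTime B ω - k := by
  have hlt : k < retTime B ω := by
    by_contra h
    push_neg at h
    exact hk _ (retTime_one_le hb) h (retTime_mem hb)
  refine ⟨hlt, le_antisymm ?_ ?_⟩
  · apply retTime_le (by omega)
    show ω (retTime B ω - k + k) ∈ B
    rw [Nat.sub_add_cancel (le_of_lt hlt)]
    exact retTime_mem hb
  · have hne : ∃ n, 1 ≤ n ∧ (fun n => ω (n + k)) n ∈ B :=
      ⟨retTime B ω - k, by omega, by
        show ω (retTime B ω - k + k) ∈ B
        rw [Nat.sub_add_cancel (le_of_lt hlt)]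
        exact retTime_mem hb⟩
    have h1 : 1 ≤ retTime B (fun n => ω (n + k)) := retTime_one_le hne
    have h2 : ω (retTime B (fun n => ω (n + k)) + k) ∈ B := retTime_mem hne
    have := retTime_le (D := B) (ω := ω) (j := retTime B (fun n => ω (n + k)) + k)
      (by omega) h2
    omega

lemma measurable_retTime [MeasurableSpace S] (hD : MeasurableSet D) :
    Measurable (fun ω : ℕ → S => retTime D ω) := by
  apply measurable_to_countable'
  intro k
  rcases Nat.eq_zero_or_pos k with rfl | hk
  · have : (fun ω : ℕ → S => retTime D ω) ⁻¹' {0}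
        = {ω : ℕ → S | ∀ n, 1 ≤ n → ω n ∉ D} := by
      ext ω
      simp only [Set.mem_preimage, Set.mem_singleton_iff, Set.mem_setOf_eq, retTime,
        Nat.sInf_eq_zero]
      constructor
      · rintro (⟨h, _⟩ | h)
        · omega
        · intro n h1 h2
          exact absurd (Set.eq_empty_iff_forall_notMem.mp h n) (by simp [h1, h2])
      · intro h
        right
        ext n
        simp only [Set.mem_setOf_eq, Set.mem_empty_iff_false, iff_false, not_and]
        exact fun h1 => h n h1
    rw [this]
    have : {ω : ℕ → S | ∀ n, 1 ≤ n → ω n ∉ D} = ⋂ (n : ℕ), ⋂ (_ : 1 ≤ n),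
        (fun ω : ℕ → S => ω n) ⁻¹' Dᶜ := by
      ext ω; simp [Set.mem_iInter]
    rw [this]
    exact MeasurableSet.iInter fun n => MeasurableSet.iInter fun _ =>
      (measurable_pi_apply n) hD.compl
  · have : (fun ω : ℕ → S => retTime D ω) ⁻¹' {k}
        = {ω : ℕ → S | ω k ∈ D} ∩ ⋂ (j : ℕ), ⋂ (_ : 1 ≤ j), ⋂ (_ : j < k),
            (fun ω : ℕ → S => ω j) ⁻¹' Dᶜ := by
      ext ω
      simp only [Set.mem_preimage, Set.mem_singleton_iff, Set.mem_inter_iff,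
        Set.mem_setOf_eq, Set.mem_iInter, Set.mem_compl_iff]
      constructor
      · rintro rfl
        have hne : {n | 1 ≤ n ∧ ω n ∈ D}.Nonempty := by
          by_contra h
          rw [Set.not_nonempty_iff_eq_empty] at h
          have : retTime D ω = 0 := by rw [retTime, h, Nat.sInf_empty]
          omega
        exact ⟨retTime_mem hne, fun j h1 h2 => retTime_min hne h1 h2⟩
      · rintro ⟨h1, h2⟩
        have hne : ∃ n, 1 ≤ n ∧ ω n ∈ D := ⟨k, hk, h1⟩
        have hle := retTime_le hk h1
        have h1le := retTime_one_le hne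
        by_contra hne2
        have hlt : retTime D ω < k := by omega
        exact h2 _ h1le hlt (retTime_mem hne)
    rw [this]
    exact ((measurable_pi_apply k) hD).inter
      (MeasurableSet.iInter fun j => MeasurableSet.iInter fun _ =>
        MeasurableSet.iInter fun _ => (measurable_pi_apply j) hD.compl)

end helpers

section markov
variable {S : Type*} [MeasurableSpace S] [MeasurableSingletonClass S]
  (P : Kernel S (ℕ → S)) [IsMarkovKernel P]

lemma ae_start (hStart : ∀ x : S, P x {ω | ω 0 = x} = 1) (y : S) :
    ∀ᵐ ω ∂ P y, ω 0 = y := by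
  have hms : MeasurableSet {ω : ℕ → S | ω 0 = y} := by
    have he0 : {ω : ℕ → S | ω 0 = y} = (fun ω : ℕ → S => ω 0) ⁻¹' {y} := rfl
    rw [he0]
    exact (measurable_pi_apply 0) (measurableSet_singleton y)
  rw [ae_iff]
  have he : {ω : ℕ → S | ¬ ω 0 = y} = {ω : ℕ → S | ω 0 = y}ᶜ := rfl
  rw [he, prob_compl_eq_zero_iff hms]
  exact hStart y

lemma bdd_integrable {μ : Measure (ℕ → S)} [IsFiniteMeasure μ] {f : (ℕ → S) → ℝ}
    (hf : Measurable f) {M : ℝ} (hM : ∀ ω, |f ω| ≤ M) : Integrable f μ :=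
  Integrable.mono' (integrable_const M) hf.aestronglyMeasurable (ae_of_all _ hM)

lemma measurable_hF {F : (ℕ → S) → ℝ} (hF : Measurable F) :
    Measurable fun z => ∫ η, F η ∂ P z := by
  have h : StronglyMeasurable (Function.uncurry fun (_ : S) η => F η) :=
    hF.stronglyMeasurable.comp_measurable measurable_snd
  exact (h.integral_kernel_prod_right (κ := P)).measurable

lemma hF_bound {F : (ℕ → S) → ℝ} {M : ℝ} (hM : ∀ ω, |F ω| ≤ M) (z : S) :
    |∫ η, F η ∂ P z| ≤ M := by
  have h := norm_integral_le_of_norm_le_const (μ := P z) (f := F) (C := M)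
    (ae_of_all _ fun ω => by simpa using hM ω)
  simpa [measure_univ] using h

lemma markov_cyl
    (hStart : ∀ x : S, P x {ω | ω 0 = x} = 1)
    (hMarkov : ∀ (x : S) (F : (ℕ → S) → ℝ), Measurable F → (∃ C, ∀ ω, |F ω| ≤ C) →
      ∫ ω, F (fun n => ω (n + 1)) ∂(P x) = ∫ ω, (∫ ω', F ω' ∂(P (ω 1))) ∂(P x)) :
    ∀ (k : ℕ) (D : ℕ → Set S), (∀ j, MeasurableSet (D j)) →
      ∀ (F : (ℕ → S) → ℝ), Measurable F → ∀ (M : ℝ), (∀ ω, |F ω| ≤ M) → ∀ (y : S),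
      ∫ ω, Set.indicator {ω : ℕ → S | ∀ j ≤ k, ω j ∈ D j} (fun _ => (1:ℝ)) ω
          * F (fun n => ω (n + k)) ∂ P y
        = ∫ ω, Set.indicator {ω : ℕ → S | ∀ j ≤ k, ω j ∈ D j} (fun _ => (1:ℝ)) ω
          * (∫ η, F η ∂ P (ω k)) ∂ P y := by
  intro k
  induction k with
  | zero =>
    intro D hD F hF M hM y
    by_cases hy : y ∈ D 0
    · have e1 : ∀ᵐ ω ∂ P y,
          Set.indicator {ω : ℕ → S | ∀ j ≤ 0, ω j ∈ D j} (fun _ => (1:ℝ)) ω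
            * F (fun n => ω (n + 0)) = F ω := by
        filter_upwards [ae_start P hStart y] with ω h0
        have hmem : ω ∈ {ω : ℕ → S | ∀ j ≤ 0, ω j ∈ D j} := by
          intro j hj
          interval_cases j
          rw [h0]; exact hy
        rw [Set.indicator_of_mem hmem]
        simp only [one_mul]
        rfl
      have e2 : ∀ᵐ ω ∂ P y,
          Set.indicator {ω : ℕ → S | ∀ j ≤ 0, ω j ∈ D j} (fun _ => (1:ℝ)) ω
            * (∫ η, F η ∂ P (ω 0)) = ∫ η, F η ∂ P y := by
        filter_upwards [ae_start P hStart y] with ω h0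
        have hmem : ω ∈ {ω : ℕ → S | ∀ j ≤ 0, ω j ∈ D j} := by
          intro j hj
          interval_cases j
          rw [h0]; exact hy
        rw [Set.indicator_of_mem hmem, h0, one_mul]
      rw [integral_congr_ae e1, integral_congr_ae e2, integral_const]
      simp [measure_univ]
    · have e1 : ∀ᵐ ω ∂ P y,
          Set.indicator {ω : ℕ → S | ∀ j ≤ 0, ω j ∈ D j} (fun _ => (1:ℝ)) ω
            * F (fun n => ω (n + 0)) = 0 := by
        filter_upwards [ae_start P hStart y] with ω h0
        have hmem : ω ∉ {ω : ℕ → S | ∀ j ≤ 0, ω j ∈ D j} := by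
          intro h
          exact hy (h0 ▸ h 0 le_rfl)
        rw [Set.indicator_of_notMem hmem, zero_mul]
      have e2 : ∀ᵐ ω ∂ P y,
          Set.indicator {ω : ℕ → S | ∀ j ≤ 0, ω j ∈ D j} (fun _ => (1:ℝ)) ω
            * (∫ η, F η ∂ P (ω 0)) = 0 := by
        filter_upwards [ae_start P hStart y] with ω h0
        have hmem : ω ∉ {ω : ℕ → S | ∀ j ≤ 0, ω j ∈ D j} := by
          intro h
          exact hy (h0 ▸ h 0 le_rfl)
        rw [Set.indicator_of_notMem hmem, zero_mul]
      rw [integral_congr_ae e1, integral_congr_ae e2]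
  | succ k ih =>
    intro D hD F hF M hM y
    have hM0 : 0 ≤ M := (abs_nonneg _).trans (hM fun _ => y)
    by_cases hy : y ∈ D 0
    · set D' : ℕ → Set S := fun j => D (j + 1) with hD'
      set E' : Set (ℕ → S) := {η : ℕ → S | ∀ j ≤ k, η j ∈ D' j} with hE'
      have hE'meas : MeasurableSet E' := by
        have : E' = ⋂ (j : ℕ), ⋂ (_ : j ≤ k), (fun η : ℕ → S => η j) ⁻¹' (D' j) := by
          ext η; simp [hE', Set.mem_iInter]
        rw [this]
        exact MeasurableSet.iInter fun j => MeasurableSet.iInter fun _ =>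
          (measurable_pi_apply j) (hD _)
      set g : (ℕ → S) → ℝ := Set.indicator E' (fun _ => (1:ℝ)) with hg
      have hgmeas : Measurable g := measurable_const.indicator hE'meas
      have hgbd : ∀ η, |g η| ≤ 1 := by
        intro η
        by_cases h : η ∈ E' <;> simp [hg, Set.indicator_of_mem, Set.indicator_of_notMem, h]
      have hkey : ∀ ω : ℕ → S, ω 0 = y →
          (ω ∈ {ω : ℕ → S | ∀ j ≤ k + 1, ω j ∈ D j} ↔ (fun n => ω (n + 1)) ∈ E') := by
        intro ω h0
        constructor
        · intro h j hj
          exact h (j + 1) (by omega)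
        · intro h j hj
          rcases Nat.eq_zero_or_pos j with rfl | hj1
          · rw [h0]; exact hy
          · obtain ⟨i, rfl⟩ := Nat.exists_eq_add_of_le hj1
            simpa [Nat.add_comm] using h i (by omega)
      -- the shifted function
      set Φ : (ℕ → S) → ℝ := fun η => g η * F (fun n => η (n + k)) with hΦ
      have hΦmeas : Measurable Φ := by
        apply hgmeas.mul
        exact hF.comp (measurable_pi_lambda _ fun n => measurable_pi_apply (n + k))
      have hΦbd : ∀ η, |Φ η| ≤ M := by
        intro η
        rw [hΦ, abs_mul]
        calc |g η| * |F fun n => η (n + k)| ≤ 1 * M :=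
              mul_le_mul (hgbd η) (hM _) (abs_nonneg _) zero_le_one
        _ = M := one_mul M
      have step1 : ∫ ω, Set.indicator {ω : ℕ → S | ∀ j ≤ k + 1, ω j ∈ D j}
            (fun _ => (1:ℝ)) ω * F (fun n => ω (n + (k + 1))) ∂ P y
          = ∫ ω, Φ (fun n => ω (n + 1)) ∂ P y := by
        apply integral_congr_ae
        filter_upwards [ae_start P hStart y] with ω h0
        by_cases h : ω ∈ {ω : ℕ → S | ∀ j ≤ k + 1, ω j ∈ D j}
        · rw [Set.indicator_of_mem h]
          have h2 : (fun n => ω (n + 1)) ∈ E' := (hkey ω h0).mp h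
          rw [hΦ]
          show (1:ℝ) * F (fun n => ω (n + (k+1))) = g (fun n => ω (n + 1)) * _
          rw [hg, Set.indicator_of_mem h2]
          rfl
        · rw [Set.indicator_of_notMem h]
          have h2 : (fun n => ω (n + 1)) ∉ E' := fun hc => h ((hkey ω h0).mpr hc)
          rw [hΦ]
          show (0:ℝ) * _ = g (fun n => ω (n + 1)) * _
          rw [hg, Set.indicator_of_notMem h2, zero_mul, zero_mul]
      have step2 := hMarkov y Φ hΦmeas ⟨M, hΦbd⟩
      -- inner integral via ih
      have hinner : ∀ z : S, ∫ η, Φ η ∂ P z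
          = ∫ η, g η * (∫ η', F η' ∂ P (η k)) ∂ P z := fun z =>
        ih D' (fun j => hD _) F hF M hM z
      set Ψ : (ℕ → S) → ℝ := fun η => g η * (∫ η', F η' ∂ P (η k)) with hΨ
      have hΨmeas : Measurable Ψ :=
        hgmeas.mul ((measurable_hF P hF).comp (measurable_pi_apply k))
      have hΨbd : ∀ η, |Ψ η| ≤ M := by
        intro η
        rw [hΨ, abs_mul]
        calc |g η| * |∫ η', F η' ∂ P (η k)| ≤ 1 * M :=
              mul_le_mul (hgbd η) (hF_bound P hM _) (abs_nonneg _) zero_le_one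
        _ = M := one_mul M
      have step3 := hMarkov y Ψ hΨmeas ⟨M, hΨbd⟩
      have step4 : ∫ ω, Ψ (fun n => ω (n + 1)) ∂ P y
          = ∫ ω, Set.indicator {ω : ℕ → S | ∀ j ≤ k + 1, ω j ∈ D j}
              (fun _ => (1:ℝ)) ω * (∫ η, F η ∂ P (ω (k + 1))) ∂ P y := by
        apply integral_congr_ae
        filter_upwards [ae_start P hStart y] with ω h0
        by_cases h : ω ∈ {ω : ℕ → S | ∀ j ≤ k + 1, ω j ∈ D j}
        · have h2 : (fun n => ω (n + 1)) ∈ E' := (hkey ω h0).mp h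
          rw [hΨ]
          show g (fun n => ω (n + 1)) * _ = _
          rw [hg, Set.indicator_of_mem h2, Set.indicator_of_mem h]
        · have h2 : (fun n => ω (n + 1)) ∉ E' := fun hc => h ((hkey ω h0).mpr hc)
          rw [hΨ]
          show g (fun n => ω (n + 1)) * _ = _
          rw [hg, Set.indicator_of_notMem h2, Set.indicator_of_notMem h]
      rw [step1, step2]
      rw [show (fun ω : ℕ → S => ∫ η, Φ η ∂ P (ω 1))
          = fun ω : ℕ → S => ∫ η, Ψ η ∂ P (ω 1) from funext fun ω => hinner (ω 1)]
      rw [← step3, step4]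
    · have e1 : ∀ᵐ ω ∂ P y,
          Set.indicator {ω : ℕ → S | ∀ j ≤ k + 1, ω j ∈ D j} (fun _ => (1:ℝ)) ω
            * F (fun n => ω (n + (k + 1))) = 0 := by
        filter_upwards [ae_start P hStart y] with ω h0
        have hmem : ω ∉ {ω : ℕ → S | ∀ j ≤ k + 1, ω j ∈ D j} := by
          intro h
          exact hy (h0 ▸ h 0 (by omega))
        rw [Set.indicator_of_notMem hmem, zero_mul]
      have e2 : ∀ᵐ ω ∂ P y,
          Set.indicator {ω : ℕ → S | ∀ j ≤ k + 1, ω j ∈ D j} (fun _ => (1:ℝ)) ω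
            * (∫ η, F η ∂ P (ω (k + 1))) = 0 := by
        filter_upwards [ae_start P hStart y] with ω h0
        have hmem : ω ∉ {ω : ℕ → S | ∀ j ≤ k + 1, ω j ∈ D j} := by
          intro h
          exact hy (h0 ▸ h 0 (by omega))
        rw [Set.indicator_of_notMem hmem, zero_mul]
      rw [integral_congr_ae e1, integral_congr_ae e2]

end markov

section gg
variable {S : Type*}

/-- Coordinate conditions describing the event `τ⁺_C = k < τ⁺_B`. -/
def DDf (B C : Set S) (k j : ℕ) : Set S :=
  if j = 0 then Set.univ else if j < k then Cᶜ ∩ Bᶜ else C ∩ Bᶜ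

/-- The event `τ⁺_C = k < τ⁺_B` as a cylinder event. -/
def GG (B C : Set S) (k : ℕ) : Set (ℕ → S) := {ω | ∀ j ≤ k, ω j ∈ DDf B C k j}

lemma mem_GG {B C : Set S} {k : ℕ} (hk : 1 ≤ k) {ω : ℕ → S} :
    ω ∈ GG B C k ↔ ω k ∈ C ∧ ω k ∉ B ∧ ∀ j, 1 ≤ j → j < k → ω j ∉ C ∧ ω j ∉ B := by
  constructor
  · intro h
    have h1 := h k le_rfl
    rw [DDf, if_neg (by omega), if_neg (by omega)] at h1
    refine ⟨h1.1, h1.2, fun j hj1 hj2 => ?_⟩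
    have h2 := h j (by omega)
    rw [DDf, if_neg (by omega), if_pos hj2] at h2
    exact h2
  · rintro ⟨h1, h2, h3⟩ j hj
    rw [DDf]
    split_ifs with hj0 hjk
    · trivial
    · exact h3 j (by omega) hjk
    · have : j = k := by omega
      subst this
      exact ⟨h1, h2⟩

lemma measurableSet_DDf [MeasurableSpace S] {B C : Set S} (hB : MeasurableSet B)
    (hC : MeasurableSet C) (k j : ℕ) : MeasurableSet (DDf B C k j) := by
  rw [DDf]
  split_ifs
  · exact MeasurableSet.univ
  · exact (hC.compl.inter hB.compl)
  · exact (hC.inter hB.compl)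

lemma measurableSet_GG [MeasurableSpace S] {B C : Set S} (hB : MeasurableSet B)
    (hC : MeasurableSet C) (k : ℕ) : MeasurableSet (GG B C k) := by
  have : GG B C k = ⋂ (j : ℕ), ⋂ (_ : j ≤ k), (fun ω : ℕ → S => ω j) ⁻¹' (DDf B C k j) := by
    ext ω; simp [GG, Set.mem_iInter]
  rw [this]
  exact MeasurableSet.iInter fun j => MeasurableSet.iInter fun _ =>
    (measurable_pi_apply j) (measurableSet_DDf hB hC k j)

end gg

/-- Splitting the expected hitting time of `B` via excursions to `C`:
`sup_{x∈A} E_x[τ⁺_B] ≤ sup_{x∈A} E_x[τ⁺_{B∪C}] + (sup_{x∈A} P_x[τ⁺_C < τ⁺_B]) · (sup_{x∈C} E_x[τ⁺_B])`,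
formulated with upper bounds `c₁, p, c₂` for the three suprema on the right. -/
theorem expected_hitting_time_splitting
    {S : Type*} [MeasurableSpace S] [MeasurableSingletonClass S]
    (P : Kernel S (ℕ → S)) [IsMarkovKernel P]
    (hStart : ∀ x : S, P x {ω | ω 0 = x} = 1)
    (hMarkov : ∀ (x : S) (F : (ℕ → S) → ℝ), Measurable F → (∃ C, ∀ ω, |F ω| ≤ C) →
      ∫ ω, F (fun n => ω (n + 1)) ∂(P x) = ∫ ω, (∫ ω', F ω' ∂(P (ω 1))) ∂(P x))
    (A B C : Set S) (hB : MeasurableSet B) (hC : MeasurableSet C)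
    -- `B` and `C` are almost surely visited (finite hitting times)
    (hhitB : ∀ x : S, P x {ω | ∃ n, 1 ≤ n ∧ ω n ∈ B} = 1)
    (hhitC : ∀ x : S, P x {ω | ∃ n, 1 ≤ n ∧ ω n ∈ C} = 1)
    -- the expected hitting times involved are finite
    (hint : ∀ x : S, Integrable (fun ω => (retTime B ω : ℝ)) (P x))
    (c₁ p c₂ : ℝ) (hp0 : 0 ≤ p) (hc₂0 : 0 ≤ c₂)
    (hc₁ : ∀ x ∈ A, ∫ ω, (retTime (B ∪ C) ω : ℝ) ∂(P x) ≤ c₁)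
    (hp : ∀ x ∈ A, (P x {ω | retTime C ω < retTime B ω}).toReal ≤ p)
    (hc₂ : ∀ x ∈ C, ∫ ω, (retTime B ω : ℝ) ∂(P x) ≤ c₂) :
    ∀ x ∈ A, ∫ ω, (retTime B ω : ℝ) ∂(P x) ≤ c₁ + p * c₂ := by
  intro x hx
  -- almost-sure event: both B and C are visited
  have haeB : ∀ᵐ ω ∂ P x, ∃ n, 1 ≤ n ∧ ω n ∈ B := by
    have hms : MeasurableSet {ω : ℕ → S | ∃ n, 1 ≤ n ∧ ω n ∈ B} := by
      have he : {ω : ℕ → S | ∃ n, 1 ≤ n ∧ ω n ∈ B}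
          = ⋃ (n : ℕ), ⋃ (_ : 1 ≤ n), (fun ω : ℕ → S => ω n) ⁻¹' B := by
        ext ω; simp [Set.mem_iUnion]
      rw [he]
      exact MeasurableSet.iUnion fun n => MeasurableSet.iUnion fun _ =>
        (measurable_pi_apply n) hB
    rw [ae_iff]
    have he : {ω : ℕ → S | ¬ ∃ n, 1 ≤ n ∧ ω n ∈ B}
        = {ω : ℕ → S | ∃ n, 1 ≤ n ∧ ω n ∈ B}ᶜ := rfl
    rw [he, prob_compl_eq_zero_iff hms]
    exact hhitB x
  have haeC : ∀ᵐ ω ∂ P x, ∃ n, 1 ≤ n ∧ ω n ∈ C := by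
    have hms : MeasurableSet {ω : ℕ → S | ∃ n, 1 ≤ n ∧ ω n ∈ C} := by
      have he : {ω : ℕ → S | ∃ n, 1 ≤ n ∧ ω n ∈ C}
          = ⋃ (n : ℕ), ⋃ (_ : 1 ≤ n), (fun ω : ℕ → S => ω n) ⁻¹' C := by
        ext ω; simp [Set.mem_iUnion]
      rw [he]
      exact MeasurableSet.iUnion fun n => MeasurableSet.iUnion fun _ =>
        (measurable_pi_apply n) hC
    rw [ae_iff]
    have he : {ω : ℕ → S | ¬ ∃ n, 1 ≤ n ∧ ω n ∈ C}
        = {ω : ℕ → S | ∃ n, 1 ≤ n ∧ ω n ∈ C}ᶜ := rfl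
    rw [he, prob_compl_eq_zero_iff hms]
    exact hhitC x
  have hae := haeB.and haeC
  have hmeasN : ∀ N : ℕ, Measurable fun ω : ℕ → S => ((min (retTime B ω) N : ℕ) : ℝ) :=
    fun N => measurable_from_nat.comp ((measurable_retTime hB).min measurable_const)
  -- the key bound for truncations
  have key : ∀ N : ℕ, ∫ ω, ((min (retTime B ω) N : ℕ) : ℝ) ∂ P x ≤ c₁ + p * c₂ := by
    intro N
    set FN : (ℕ → S) → ℝ := fun η => ((min (retTime B η) N : ℕ) : ℝ) with hFN
    have hFNmeas : Measurable FN :=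
      measurable_from_nat.comp ((measurable_retTime hB).min measurable_const)
    have hFNnonneg : ∀ η, 0 ≤ FN η := by
      intro η
      show (0:ℝ) ≤ ((min (retTime B η) N : ℕ) : ℝ)
      positivity
    have hFNbd : ∀ η, |FN η| ≤ (N : ℝ) := by
      intro η
      rw [abs_of_nonneg (hFNnonneg η)]
      show ((min (retTime B η) N : ℕ) : ℝ) ≤ (N : ℝ)
      exact_mod_cast min_le_right _ _
    have hFNle : ∀ η, FN η ≤ (retTime B η : ℝ) := by
      intro η
      show ((min (retTime B η) N : ℕ) : ℝ) ≤ ((retTime B η : ℕ) : ℝ)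
      exact_mod_cast min_le_left _ _
    -- the conditional expectation of FN
    have hhmeas : Measurable fun z : S => ∫ η, FN η ∂ P z := measurable_hF P hFNmeas
    have hhbd : ∀ z, |∫ η, FN η ∂ P z| ≤ (N : ℝ) := hF_bound P hFNbd
    have hhC : ∀ z ∈ C, ∫ η, FN η ∂ P z ≤ c₂ := by
      intro z hz
      calc ∫ η, FN η ∂ P z ≤ ∫ η, (retTime B η : ℝ) ∂ P z :=
            integral_mono (bdd_integrable hFNmeas hFNbd) (hint z) hFNle
      _ ≤ c₂ := hc₂ z hz
    -- indicator functions of the events G k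
    have hindmeas : ∀ k : ℕ, Measurable (Set.indicator (GG B C k) (fun _ => (1:ℝ))) :=
      fun k => measurable_const.indicator (measurableSet_GG hB hC k)
    have hind01 : ∀ (k : ℕ) (ω : ℕ → S),
        0 ≤ Set.indicator (GG B C k) (fun _ => (1:ℝ)) ω ∧
          Set.indicator (GG B C k) (fun _ => (1:ℝ)) ω ≤ 1 := by
      intro k ω
      by_cases h : ω ∈ GG B C k <;>
        simp [Set.indicator_of_mem, Set.indicator_of_notMem, h]
    -- the excursion terms
    set T : ℕ → (ℕ → S) → ℝ := fun k ω =>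
      Set.indicator (GG B C k) (fun _ => (1:ℝ)) ω * FN (fun n => ω (n + k)) with hT
    have hTmeas : ∀ k, Measurable (T k) := by
      intro k
      exact (hindmeas k).mul
        (hFNmeas.comp (measurable_pi_lambda _ fun n => measurable_pi_apply (n + k)))
    have hTnonneg : ∀ k ω, 0 ≤ T k ω := by
      intro k ω
      exact mul_nonneg (hind01 k ω).1 (hFNnonneg _)
    have hTbd : ∀ k ω, |T k ω| ≤ (N : ℝ) := by
      intro k ω
      rw [abs_of_nonneg (hTnonneg k ω)]
      show Set.indicator (GG B C k) (fun _ => (1:ℝ)) ω * FN (fun n => ω (n + k)) ≤ (N : ℝ)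
      calc Set.indicator (GG B C k) (fun _ => (1:ℝ)) ω * FN (fun n => ω (n + k))
          ≤ 1 * (N : ℝ) := mul_le_mul (hind01 k ω).2
            ((abs_le.mp (hFNbd _)).2) (hFNnonneg _) zero_le_one
      _ = (N : ℝ) := one_mul _
    have hTint : ∀ k, Integrable (T k) (P x) := fun k => bdd_integrable (hTmeas k) (hTbd k)
    -- pointwise a.e. bound
    have hpt : ∀ᵐ ω ∂ P x, ((min (retTime B ω) N : ℕ) : ℝ)
        ≤ (retTime (B ∪ C) ω : ℝ) + ∑ k ∈ Finset.Icc 1 N, T k ω := by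
      filter_upwards [hae] with ω hω
      obtain ⟨hbB, hbC⟩ := hω
      have hu : retTime (B ∪ C) ω = min (retTime B ω) (retTime C ω) :=
        retTime_union hbB hbC
      have hsum0 : 0 ≤ ∑ k ∈ Finset.Icc 1 N, T k ω :=
        Finset.sum_nonneg fun k _ => hTnonneg k ω
      rcases le_or_gt (retTime B ω) (retTime C ω) with hbc | hcb
      · have h1 : min (retTime B ω) N ≤ retTime (B ∪ C) ω := by rw [hu]; omega
        calc ((min (retTime B ω) N : ℕ) : ℝ) ≤ (retTime (B ∪ C) ω : ℝ) := by
              exact_mod_cast h1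
        _ ≤ _ := le_add_of_nonneg_right hsum0
      · have h1c : 1 ≤ retTime C ω := retTime_one_le hbC
        by_cases hcN : retTime C ω ≤ N
        · have hωG : ω ∈ GG B C (retTime C ω) :=
            (mem_GG h1c).mpr ⟨retTime_mem hbC, retTime_min hbB h1c hcb,
              fun j hj1 hj2 => ⟨retTime_min hbC hj1 hj2, retTime_min hbB hj1 (by omega)⟩⟩
          have hshift := retTime_shift hbB (k := retTime C ω) (fun j hj1 hjk => by
            rcases Nat.lt_or_ge j (retTime C ω) with h | h
            · exact retTime_min hbB hj1 (by omega)
            · have hjx : j = retTime C ω := by omega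
              rw [hjx]
              exact retTime_min hbB h1c hcb)
          have hTc : T (retTime C ω) ω
              = ((min (retTime B ω - retTime C ω) N : ℕ) : ℝ) := by
            show Set.indicator (GG B C (retTime C ω)) (fun _ => (1:ℝ)) ω
                * FN (fun n => ω (n + retTime C ω)) = _
            rw [Set.indicator_of_mem hωG, one_mul]
            show ((min (retTime B (fun n => ω (n + retTime C ω))) N : ℕ) : ℝ) = _
            rw [hshift.2]
          have hsum : T (retTime C ω) ω ≤ ∑ k ∈ Finset.Icc 1 N, T k ω :=
            Finset.single_le_sum (f := fun k => T k ω) (fun k _ => hTnonneg k ω)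
              (Finset.mem_Icc.mpr ⟨h1c, hcN⟩)
          have hkey2 : min (retTime B ω) N
              ≤ retTime (B ∪ C) ω + min (retTime B ω - retTime C ω) N := by
            rw [hu]; omega
          calc ((min (retTime B ω) N : ℕ) : ℝ)
              ≤ (retTime (B ∪ C) ω : ℝ) + ((min (retTime B ω - retTime C ω) N : ℕ) : ℝ) := by
                exact_mod_cast hkey2
          _ ≤ (retTime (B ∪ C) ω : ℝ) + ∑ k ∈ Finset.Icc 1 N, T k ω :=
                add_le_add_right (hTc ▸ hsum) _
        · have h1 : min (retTime B ω) N ≤ retTime (B ∪ C) ω := by rw [hu]; omega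
          calc ((min (retTime B ω) N : ℕ) : ℝ) ≤ (retTime (B ∪ C) ω : ℝ) := by
                exact_mod_cast h1
          _ ≤ _ := le_add_of_nonneg_right hsum0
    -- integrability of the return time to B ∪ C
    have hBCint : Integrable (fun ω => (retTime (B ∪ C) ω : ℝ)) (P x) := by
      have hm : Measurable fun ω : ℕ → S => ((retTime (B ∪ C) ω : ℕ) : ℝ) :=
        measurable_from_nat.comp (measurable_retTime (hB.union hC))
      apply (hint x).mono hm.aestronglyMeasurable
      filter_upwards [hae] with ω hω
      obtain ⟨hbB, hbC⟩ := hω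
      rw [Real.norm_eq_abs, Real.norm_eq_abs, abs_of_nonneg (by positivity),
        abs_of_nonneg (by positivity)]
      have hu : retTime (B ∪ C) ω = min (retTime B ω) (retTime C ω) :=
        retTime_union hbB hbC
      rw [hu]
      exact_mod_cast min_le_left _ _
    -- the Markov property applied to each term
    have hmark : ∀ k : ℕ, ∫ ω, T k ω ∂ P x
        = ∫ ω, Set.indicator (GG B C k) (fun _ => (1:ℝ)) ω * (∫ η, FN η ∂ P (ω k)) ∂ P x := by
      intro k
      exact markov_cyl P hStart hMarkov k (DDf B C k)
        (fun j => measurableSet_DDf hB hC k j) FN hFNmeas (N : ℝ) hFNbd x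
    -- bounding each term
    have hterm : ∀ k ∈ Finset.Icc 1 N, ∫ ω, T k ω ∂ P x
        ≤ (P x (GG B C k)).toReal * c₂ := by
      intro k hk
      have hk1 : 1 ≤ k := (Finset.mem_Icc.mp hk).1
      rw [hmark k]
      calc ∫ ω, Set.indicator (GG B C k) (fun _ => (1:ℝ)) ω * (∫ η, FN η ∂ P (ω k)) ∂ P x
          ≤ ∫ ω, Set.indicator (GG B C k) (fun _ => (1:ℝ)) ω * c₂ ∂ P x := by
            apply integral_mono
            · apply bdd_integrable ((hindmeas k).mul (hhmeas.comp (measurable_pi_apply k)))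
                (M := (N : ℝ))
              intro ω
              rw [Pi.mul_apply, abs_mul]
              calc |Set.indicator (GG B C k) (fun _ => (1:ℝ)) ω| * |∫ η, FN η ∂ P (ω k)|
                  ≤ 1 * (N : ℝ) := mul_le_mul (by
                      rw [abs_of_nonneg (hind01 k ω).1]; exact (hind01 k ω).2)
                    (hhbd _) (abs_nonneg _) zero_le_one
              _ = (N : ℝ) := one_mul _
            · exact bdd_integrable ((hindmeas k).mul measurable_const) (M := |c₂|)
                (fun ω => by
                  rw [abs_mul]
                  calc |Set.indicator (GG B C k) (fun _ => (1:ℝ)) ω| * |c₂|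
                      ≤ 1 * |c₂| := mul_le_mul_of_nonneg_right (by
                        rw [abs_of_nonneg (hind01 k ω).1]; exact (hind01 k ω).2)
                        (abs_nonneg _)
                  _ = |c₂| := one_mul _)
            · intro ω
              show Set.indicator (GG B C k) (fun _ => (1:ℝ)) ω * (∫ η, FN η ∂ P (ω k))
                  ≤ Set.indicator (GG B C k) (fun _ => (1:ℝ)) ω * c₂
              by_cases h : ω ∈ GG B C k
              · rw [Set.indicator_of_mem h, one_mul, one_mul]
                exact hhC (ω k) ((mem_GG hk1).mp h).1
              · rw [Set.indicator_of_notMem h, zero_mul, zero_mul]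
        _ = (P x (GG B C k)).toReal * c₂ := by
            rw [integral_mul_const,
              show (fun _ : ℕ → S => (1:ℝ)) = (1 : (ℕ → S) → ℝ) from rfl,
              integral_indicator_one (measurableSet_GG hB hC k)]
            rfl
    -- disjointness of the events
    have hdisj : ((Finset.Icc 1 N : Finset ℕ) : Set ℕ).PairwiseDisjoint
        (fun k => GG B C k) := by
      intro k hk k' hk' hne
      simp only [Finset.coe_Icc, Set.mem_Icc] at hk hk'
      apply Set.disjoint_left.mpr
      intro ω hωk hωk'
      rcases hne.lt_or_gt with h | h
      · exact (((mem_GG hk'.1).mp hωk').2.2 k hk.1 h).1 ((mem_GG hk.1).mp hωk).1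
      · exact (((mem_GG hk.1).mp hωk).2.2 k' hk'.1 h).1 ((mem_GG hk'.1).mp hωk').1
    -- the union is a.e. contained in {τ_C < τ_B}
    have hP : ∑ k ∈ Finset.Icc 1 N, (P x (GG B C k)).toReal ≤ p := by
      have hsum : ∑ k ∈ Finset.Icc 1 N, P x (GG B C k)
          = P x (⋃ k ∈ Finset.Icc 1 N, GG B C k) :=
        (measure_biUnion_finset hdisj fun k _ => measurableSet_GG hB hC k).symm
      have hsub : P x (⋃ k ∈ Finset.Icc 1 N, GG B C k)
          ≤ P x {ω | retTime C ω < retTime B ω} := by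
        apply measure_mono_ae
        filter_upwards [hae] with ω hω
        intro hmem
        obtain ⟨hbB, hbC⟩ := hω
        obtain ⟨k, hk, hωG⟩ := Set.mem_iUnion₂.mp hmem
        have hk1 : 1 ≤ k := (Finset.mem_Icc.mp hk).1
        obtain ⟨h1, h2, h3⟩ := (mem_GG hk1).mp hωG
        have hCk : retTime C ω ≤ k := retTime_le hk1 h1
        have hCk2 : ¬ retTime C ω < k := by
          intro hlt
          exact (h3 (retTime C ω) (retTime_one_le hbC) hlt).1 (retTime_mem hbC)
        have hCeq : retTime C ω = k := by omega
        have hBk := (retTime_shift hbB (k := k) (fun j hj1 hjk => by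
          rcases Nat.lt_or_ge j k with h | h
          · exact (h3 j hj1 h).2
          · have hjx : j = k := by omega
            rw [hjx]
            exact h2)).1
        show retTime C ω < retTime B ω
        omega
      calc ∑ k ∈ Finset.Icc 1 N, (P x (GG B C k)).toReal
          = (∑ k ∈ Finset.Icc 1 N, P x (GG B C k)).toReal :=
            (ENNReal.toReal_sum fun k _ => measure_ne_top _ _).symm
      _ ≤ (P x {ω | retTime C ω < retTime B ω}).toReal := by
            rw [hsum]
            exact ENNReal.toReal_mono (measure_ne_top _ _) hsub
      _ ≤ p := hp x hx
    -- putting everything together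
    calc ∫ ω, ((min (retTime B ω) N : ℕ) : ℝ) ∂ P x
        ≤ ∫ ω, ((retTime (B ∪ C) ω : ℝ) + ∑ k ∈ Finset.Icc 1 N, T k ω) ∂ P x := by
          apply integral_mono_ae
            (bdd_integrable (hmeasN N) (M := (N : ℝ)) (fun ω => by
              rw [abs_of_nonneg (by positivity)]
              exact_mod_cast min_le_right _ _))
            (hBCint.add (integrable_finset_sum _ fun k _ => hTint k)) hpt
      _ = ∫ ω, (retTime (B ∪ C) ω : ℝ) ∂ P x + ∑ k ∈ Finset.Icc 1 N, ∫ ω, T k ω ∂ P x := by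
          rw [integral_add hBCint (integrable_finset_sum _ fun k _ => hTint k),
            integral_finset_sum _ fun k _ => hTint k]
      _ ≤ c₁ + ∑ k ∈ Finset.Icc 1 N, (P x (GG B C k)).toReal * c₂ :=
          add_le_add (hc₁ x hx) (Finset.sum_le_sum hterm)
      _ = c₁ + (∑ k ∈ Finset.Icc 1 N, (P x (GG B C k)).toReal) * c₂ := by
          rw [Finset.sum_mul]
      _ ≤ c₁ + p * c₂ :=
          add_le_add_right (mul_le_mul_of_nonneg_right hP hc₂0) _
  -- pass to the limit
  have hlim : Filter.Tendsto (fun N : ℕ => ∫ ω, ((min (retTime B ω) N : ℕ) : ℝ) ∂ P x)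
      Filter.atTop (nhds (∫ ω, (retTime B ω : ℝ) ∂ P x)) := by
    apply tendsto_integral_of_dominated_convergence (fun ω => (retTime B ω : ℝ))
      (fun N => (hmeasN N).aestronglyMeasurable) (hint x)
    · intro N
      apply ae_of_all
      intro ω
      rw [Real.norm_eq_abs, abs_of_nonneg (by positivity)]
      exact_mod_cast min_le_left _ _
    · apply ae_of_all
      intro ω
      apply tendsto_atTop_of_eventually_const (i₀ := retTime B ω)
      intro N hN
      congr 1
      omega
  exact le_of_tendsto hlim (Filter.Eventually.of_forall key)
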